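/- arXiv:1604.05163 — 3 statements merged into one kernel-verified Lean document; each statement's English description precedes it below -/
import Mathlib

section
/- Let b, c, ν, w, ρ ∈ ℂ with Re(ρ) > 0, Re(c) > 0, Re(ν) > -1 and Re(w) > -1, let α, β > 0 be real and let z > 0 be real. Then G_ν^{(b,c)}(αz;ρ) · G_w^{(b,c)}(βz;ρ) = ((αz)^ν (βz)^w)/(2^{ν+w} Γ(c)² Γ(ν+1)² Γ(w+1)²) · ∫_0^∞ ∫_0^∞ t^{c+ν-1} u^{c+w-1} e^{-t-u-ρ/t-ρ/u} · ₀F₃(-; ν+1, (ν+1)/2, (ν+2)/2; -b α² z² t²/16) · ₀F₃(-; w+1, (w+1)/2, (w+2)/2; -b β² z² u²/16) dt du, the double integral being over real t, u ∈ (0,∞). -/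
open Complex MeasureTheory Real Set

/-- Extended Gamma function `Γ_ρ(x) = ∫_0^∞ t^(x-1) e^(-t-ρ/t) dt`. -/
noncomputable def extGamma (ρ x : ℂ) : ℂ :=
  ∫ t in Ioi (0:ℝ), (t:ℂ) ^ (x - 1) * Complex.exp (-(t:ℂ) - ρ / (t:ℂ))

/-- Generalized Pochhammer symbol `(c;ρ)_μ = Γ_ρ(c+μ)/Γ(c)`. -/
noncomputable def genPoch (c ρ μ : ℂ) : ℂ := extGamma ρ (c + μ) / Complex.Gamma c

/-- Unified four parameter Bessel function `G_ν^{(b,c)}(z;ρ)` with complex order,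
powers being principal complex powers. -/
noncomputable def unifiedG (b c ν ρ z : ℂ) : ℂ :=
  ∑' k : ℕ, (-b) ^ k * genPoch c ρ (2 * (k:ℂ) + ν) * (z / 2) ^ (2 * (k:ℂ) + ν) /
    ((k.factorial : ℂ) * Complex.Gamma (ν + (k:ℂ) + 1) * Complex.Gamma (ν + 2 * (k:ℂ) + 1))

/-- Unified four parameter Bessel function with integer order, powers being integer powers. -/
noncomputable def unifiedGInt (b c ρ : ℂ) (ν : ℤ) (z : ℂ) : ℂ :=
  ∑' k : ℕ, (-b) ^ k * genPoch c ρ (2 * (k:ℂ) + (ν:ℂ)) * (z / 2) ^ (2 * (k:ℤ) + ν) /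
    ((k.factorial : ℂ) * Complex.Gamma ((ν:ℂ) + (k:ℂ) + 1) * Complex.Gamma ((ν:ℂ) + 2 * (k:ℂ) + 1))

/-- Pochhammer symbol `(a)_k = Γ(a+k)/Γ(a)`. -/
noncomputable def poch (a : ℂ) (k : ℕ) : ℂ := Complex.Gamma (a + (k:ℂ)) / Complex.Gamma a

/-- Generalized hypergeometric function `₀F₃`. -/
noncomputable def hyp0F3 (a₁ a₂ a₃ w : ℂ) : ℂ :=
  ∑' k : ℕ, w ^ k / (poch a₁ k * poch a₂ k * poch a₃ k * (k.factorial : ℂ))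

/-- Generalized hypergeometric function `₂F₃`. -/
noncomputable def hyp2F3 (a₁ a₂ b₁ b₂ b₃ w : ℂ) : ℂ :=
  ∑' k : ℕ, poch a₁ k * poch a₂ k * w ^ k /
    (poch b₁ k * poch b₂ k * poch b₃ k * (k.factorial : ℂ))

/-- Bessel function of the first kind `J_μ(z)` for real `z > 0`. -/
noncomputable def besselJ (μ : ℂ) (z : ℝ) : ℂ :=
  ∑' k : ℕ, (-1) ^ k * ((z:ℂ) / 2) ^ (2 * (k:ℂ) + μ) /
    ((k.factorial : ℂ) * Complex.Gamma (μ + (k:ℂ) + 1))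

/-- Generalized four parameter spherical Bessel function
`g_ν^{(b,c)}(z;ρ) = √(π/(2z)) · G_{ν+1/2}^{(b,c-1/2)}(z;ρ)`. -/
noncomputable def sphG (b c ν ρ : ℂ) (z : ℝ) : ℂ :=
  (Real.sqrt (π / (2 * z)) : ℂ) * unifiedG b (c - 1/2) (ν + 1/2) ρ (z:ℂ)

/-- Generalized four parameter Bessel-Clifford function
`C_ν^{(b,λ)}(z;ρ) = z^{-ν/2} · G_ν^{(b,λ)}(2√z;ρ)` for real `z > 0`. -/
noncomputable def cliffC (b lam ν ρ : ℂ) (z : ℝ) : ℂ :=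
  (z:ℂ) ^ (-ν / 2) * unifiedG b lam ν ρ ((2 * Real.sqrt z : ℝ) : ℂ)

/-!
Writing `(c;ρ)_{2k+ν} Γ(c) = Γ_ρ(c+ν+2k)` as an integral, the series for `G_ν^{(b,c)}(x;ρ)` becomes
the termwise integral of `t^{c+ν-1} e^{-t-ρ/t}` against the `₀F₃` series in `-b x² t² / 16`: the
Gamma factors become `Γ(ν+1)² (ν+1)_k (ν+1)_{2k}`, and the duplication formula
`(a)_{2k} = 4^k (a/2)_k ((a+1)/2)_k` splits the second Pochhammer symbol. Sum and integral commute
because `e^{-Re ρ / t} ≤ t / Re ρ` bounds the absolute series by `∑ C^k Γ(s+2k+1) / (k!)^4`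
with `s = Re(c+ν) > -1`, which converges by the ratio test. The product formula is the product of
two such single integrals.
-/

open Filter Polynomial
open scoped Nat

lemma ne_neg_natCast_of_re_pos {a : ℂ} (ha : 0 < a.re) (n : ℕ) : a ≠ -n := by
  rintro rfl
  simp only [neg_re, natCast_re, Left.neg_pos_iff] at ha
  exact (Nat.cast_nonneg n).not_gt ha

lemma re_pos_of_neg_one_lt_re {ν : ℂ} (hν : -1 < ν.re) :
    0 < (ν + 1).re ∧ 0 < ((ν + 1) / 2).re ∧ 0 < ((ν + 2) / 2).re := by
  simp only [add_re, one_re, div_ofNat_re, re_ofNat]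
  refine ⟨?_, ?_, ?_⟩ <;> linarith

lemma poch_eq_eval_ascPochhammer {a : ℂ} (ha : ∀ n : ℕ, a ≠ -n) (k : ℕ) :
    poch a k = (ascPochhammer ℂ k).eval a :=
  Complex.Gamma_add_nat_div_Gamma_eq a ha

lemma Gamma_add_nat_eq_mul_eval_ascPochhammer {a : ℂ} (ha : ∀ n : ℕ, a ≠ -n) (k : ℕ) :
    Complex.Gamma (a + k) = Complex.Gamma a * (ascPochhammer ℂ k).eval a := by
  rw [← poch_eq_eval_ascPochhammer ha, poch, mul_div_cancel₀ _ (Complex.Gamma_ne_zero ha)]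

lemma ascPochhammer_eval_two_mul {K : Type*} [Field K] [CharZero K] (a : K) (k : ℕ) :
    (ascPochhammer K (2 * k)).eval a =
      4 ^ k * (ascPochhammer K k).eval (a / 2) * (ascPochhammer K k).eval ((a + 1) / 2) := by
  induction k with
  | zero => simp
  | succ k ih =>
    rw [show 2 * (k + 1) = 2 * k + 1 + 1 by ring, ascPochhammer_succ_eval,
      ascPochhammer_succ_eval, ih, ascPochhammer_succ_eval, ascPochhammer_succ_eval]
    push_cast
    ring

lemma pow_mul_factorial_le_norm_eval_ascPochhammer {a : ℂ} {m : ℝ} (hm₀ : 0 ≤ m) (hm₁ : m ≤ 1)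
    (hma : m ≤ a.re) (k : ℕ) : m ^ k * k ! ≤ ‖(ascPochhammer ℂ k).eval a‖ := by
  induction k with
  | zero => simp
  | succ k ih =>
    have hk : m * (k + 1) ≤ ‖a + k‖ := calc
      m * (k + 1) ≤ a.re + k := by nlinarith [(k.cast_nonneg : (0:ℝ) ≤ k)]
      _ = (a + k).re := by simp
      _ ≤ ‖a + k‖ := Complex.re_le_norm _
    rw [ascPochhammer_succ_eval, norm_mul, Nat.factorial_succ]
    push_cast
    calc m ^ (k + 1) * ((k + 1) * k !) = (m ^ k * k !) * (m * (k + 1)) := by ring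
      _ ≤ _ := mul_le_mul ih hk (by positivity) (norm_nonneg _)

lemma summable_pow_mul_Gamma_div_factorial_pow_four {C s : ℝ} (hC : 0 ≤ C) (hs : -1 < s) :
    Summable fun k : ℕ => C ^ k * Real.Gamma (s + 2 * k + 1) / (k ! : ℝ) ^ 4 := by
  set N : ℕ → ℝ := fun k => C ^ k * Real.Gamma (s + 2 * k + 1) / (k ! : ℝ) ^ 4
  have hpos : ∀ k : ℕ, 0 < s + 2 * k + 1 := fun k => by linarith [(k.cast_nonneg : (0:ℝ) ≤ k)]
  have hN : ∀ k, 0 ≤ N k := fun k => by have := Real.Gamma_pos_of_pos (hpos k); positivity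
  have hrec : ∀ k : ℕ,
      N (k + 1) = N k * (C * ((s + 2 * k + 1) * (s + 2 * k + 2)) / (k + 1) ^ 4) := by
    intro k
    have hΓ : Real.Gamma (s + 2 * ↑(k + 1) + 1) =
        (s + 2 * k + 1) * (s + 2 * k + 2) * Real.Gamma (s + 2 * k + 1) := by
      rw [show s + 2 * ↑(k + 1) + 1 = (s + 2 * k + 1) + 1 + 1 by push_cast; ring,
        Real.Gamma_add_one (by linarith [hpos k]), Real.Gamma_add_one (hpos k).ne']
      ring
    simp only [N, hΓ, Nat.factorial_succ]
    push_cast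
    field_simp
    ring
  set K := C * (|s| + 2) ^ 2
  refine summable_of_ratio_norm_eventually_le (r := 1 / 2) (by norm_num) ?_
  filter_upwards [eventually_ge_atTop ⌈2 * K⌉₊] with k hk
  have hk' : 2 * K ≤ k + 1 := by linarith [Nat.ceil_le.1 hk]
  have hfac : C * ((s + 2 * k + 1) * (s + 2 * k + 2)) ≤ 1 / 2 * (k + 1) ^ 4 := by
    have h1 : s + 2 * k + 2 ≤ (|s| + 2) * (k + 1) := by
      nlinarith [le_abs_self s, abs_nonneg s, (k.cast_nonneg : (0:ℝ) ≤ k)]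
    have h2 : (s + 2 * k + 1) * (s + 2 * k + 2) ≤ ((|s| + 2) * (k + 1)) ^ 2 := by
      nlinarith [hpos k]
    calc C * ((s + 2 * k + 1) * (s + 2 * k + 2)) ≤ K * (k + 1) ^ 2 := by
          simp only [K]; nlinarith
      _ ≤ (k + 1) / 2 * (k + 1) ^ 2 := by gcongr; linarith
      _ ≤ (k + 1) ^ 2 / 2 * (k + 1) ^ 2 := by gcongr; nlinarith [(k.cast_nonneg : (0:ℝ) ≤ k)]
      _ = 1 / 2 * (k + 1) ^ 4 := by ring
  rw [Real.norm_of_nonneg (hN _), Real.norm_of_nonneg (hN _), hrec, mul_comm (1 / 2)]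
  exact mul_le_mul_of_nonneg_left ((div_le_iff₀ (by positivity)).2 hfac) (hN k)

lemma summable_norm_hyp0F3_term_mul_Gamma {a₁ a₂ a₃ : ℂ} (h₁ : 0 < a₁.re) (h₂ : 0 < a₂.re)
    (h₃ : 0 < a₃.re) (w : ℂ) {s : ℝ} (hs : -1 < s) :
    Summable fun k : ℕ => ‖w ^ k / (poch a₁ k * poch a₂ k * poch a₃ k * k !)‖ *
      Real.Gamma (s + 2 * k + 1) := by
  set m := min 1 (min a₁.re (min a₂.re a₃.re))
  have hm : 0 < m := by positivity
  have hm_one : m ≤ 1 := min_le_left _ _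
  have hm₁ : m ≤ a₁.re := (min_le_right _ _).trans (min_le_left _ _)
  have hm₂ : m ≤ a₂.re := (min_le_right _ _).trans ((min_le_right _ _).trans (min_le_left _ _))
  have hm₃ : m ≤ a₃.re := (min_le_right _ _).trans ((min_le_right _ _).trans (min_le_right _ _))
  have hpoch : ∀ {a : ℂ}, 0 < a.re → m ≤ a.re → ∀ k : ℕ, m ^ k * k ! ≤ ‖poch a k‖ :=
    fun ha hma k => (poch_eq_eval_ascPochhammer (ne_neg_natCast_of_re_pos ha) k) ▸
      pow_mul_factorial_le_norm_eval_ascPochhammer hm.le hm_one hma k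
  have hΓ : ∀ k : ℕ, 0 < Real.Gamma (s + 2 * k + 1) := fun k =>
    Real.Gamma_pos_of_pos (by linarith [(k.cast_nonneg : (0:ℝ) ≤ k)])
  refine (summable_pow_mul_Gamma_div_factorial_pow_four (C := ‖w‖ / m ^ 3) (by positivity)
    hs).of_nonneg_of_le (fun k => by have := hΓ k; positivity) (fun k => ?_)
  rw [norm_div, norm_mul, norm_mul, norm_mul, norm_pow, Complex.norm_natCast, div_pow, ← pow_mul,
    mul_div_right_comm, mul_comm 3]
  refine mul_le_mul_of_nonneg_right ?_ (hΓ k).le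
  rw [div_div, pow_mul]
  gcongr ‖w‖ ^ k / ?_
  calc ((m ^ k) ^ 3 * (k ! : ℝ) ^ 4)
      = (m ^ k * k !) * (m ^ k * k !) * (m ^ k * k !) * k ! := by ring
    _ ≤ _ := by
      gcongr
      exacts [hpoch h₁ hm₁ k, hpoch h₂ hm₂ k, hpoch h₃ hm₃ k]

noncomputable def extGammaIntegrand (ρ x : ℂ) (t : ℝ) : ℂ :=
  (t:ℂ) ^ (x - 1) * Complex.exp (-(t:ℂ) - ρ / (t:ℂ))

lemma norm_extGammaIntegrand_le {ρ : ℂ} (hρ : 0 < ρ.re) (x : ℂ) {t : ℝ} (ht : 0 < t) :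
    ‖extGammaIntegrand ρ x t‖ ≤ Real.exp (-t) * t ^ x.re / ρ.re := by
  have hu : 0 < ρ.re / t := div_pos hρ ht
  have hexp : Real.exp (-(ρ.re / t)) ≤ t / ρ.re := calc
    Real.exp (-(ρ.re / t)) = (Real.exp (ρ.re / t))⁻¹ := Real.exp_neg _
    _ ≤ (ρ.re / t)⁻¹ := inv_anti₀ hu (by linarith [Real.add_one_le_exp (ρ.re / t)])
    _ = t / ρ.re := inv_div _ _
  rw [extGammaIntegrand, norm_mul, Complex.norm_cpow_eq_rpow_re_of_pos ht, Complex.norm_exp]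
  simp only [sub_re, neg_re, ofReal_re, Complex.div_ofReal_re, sub_eq_add_neg (-t), Real.exp_add]
  calc t ^ (x.re - 1) * (Real.exp (-t) * Real.exp (-(ρ.re / t)))
      ≤ t ^ (x.re - 1) * (Real.exp (-t) * (t / ρ.re)) := by gcongr
    _ = Real.exp (-t) * (t ^ (x.re - 1) * t) / ρ.re := by ring
    _ = Real.exp (-t) * t ^ x.re / ρ.re := by rw [← Real.rpow_add_one ht.ne', sub_add_cancel]

lemma lintegral_enorm_extGammaIntegrand_le {ρ x : ℂ} (hρ : 0 < ρ.re) (hx : -1 < x.re) :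
    ∫⁻ t in Ioi 0, ‖extGammaIntegrand ρ x t‖ₑ ≤ ENNReal.ofReal (Real.Gamma (x.re + 1) / ρ.re) := by
  have hσ : 0 < x.re + 1 := by linarith
  have hint : IntegrableOn (fun t => Real.exp (-t) * t ^ x.re / ρ.re) (Ioi 0) := by
    simpa [IntegrableOn] using (Real.GammaIntegral_convergent hσ).div_const ρ.re
  rw [Real.Gamma_eq_integral hσ, ← integral_div, add_sub_cancel_right,
    ofReal_integral_eq_lintegral_ofReal hint]
  · refine setLIntegral_mono' measurableSet_Ioi fun t ht => ?_
    rw [← ofReal_norm]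
    exact ENNReal.ofReal_le_ofReal (norm_extGammaIntegrand_le hρ x ht)
  · filter_upwards [ae_restrict_mem measurableSet_Ioi] with t (ht : 0 < t)
    positivity

lemma continuousOn_extGammaIntegrand (ρ x : ℂ) : ContinuousOn (extGammaIntegrand ρ x) (Ioi 0) := by
  intro t (ht : 0 < t)
  have ht' : (t:ℂ) ≠ 0 := ofReal_ne_zero.2 ht.ne'
  apply ContinuousAt.continuousWithinAt
  unfold extGammaIntegrand
  fun_prop (disch := first | exact ht' | exact Or.inl (by simpa using ht))

lemma integral_tsum_mul_extGammaIntegrand {ρ : ℂ} (hρ : 0 < ρ.re) {a x : ℕ → ℂ}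
    (hx : ∀ k, -1 < (x k).re) (hsum : Summable fun k => ‖a k‖ * Real.Gamma ((x k).re + 1)) :
    ∫ t in Ioi 0, ∑' k, a k * extGammaIntegrand ρ (x k) t = ∑' k, a k * extGamma ρ (x k) := by
  have hbound : ∀ k, ∫⁻ t in Ioi 0, ‖a k * extGammaIntegrand ρ (x k) t‖ₑ ≤
      ENNReal.ofReal (‖a k‖ * (Real.Gamma ((x k).re + 1) / ρ.re)) := fun k => by
    simp_rw [enorm_mul]
    rw [lintegral_const_mul' _ _ enorm_ne_top, ENNReal.ofReal_mul (norm_nonneg _),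
      ofReal_norm]
    gcongr
    exact lintegral_enorm_extGammaIntegrand_le hρ (hx k)
  have hnonneg : ∀ k, 0 ≤ ‖a k‖ * (Real.Gamma ((x k).re + 1) / ρ.re) := fun k =>
    mul_nonneg (norm_nonneg _) (div_nonneg (Real.Gamma_pos_of_pos (by linarith [hx k])).le hρ.le)
  rw [integral_tsum]
  · simp_rw [integral_const_mul]
    rfl
  · exact fun k => ((continuousOn_extGammaIntegrand ρ (x k)).aestronglyMeasurable
      measurableSet_Ioi).const_mul _
  · refine ne_top_of_le_ne_top ?_ (ENNReal.tsum_le_tsum hbound)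
    rw [← ENNReal.ofReal_tsum_of_nonneg hnonneg]
    · exact ENNReal.ofReal_ne_top
    · simpa only [mul_div_assoc] using hsum.div_const ρ.re

lemma extGammaIntegrand_mul_hyp0F3 (ρ x a₁ a₂ a₃ w : ℂ) {t : ℝ} (ht : 0 < t) :
    extGammaIntegrand ρ x t * hyp0F3 a₁ a₂ a₃ (w * (t:ℂ) ^ 2) =
      ∑' k : ℕ, w ^ k / (poch a₁ k * poch a₂ k * poch a₃ k * k !) *
        extGammaIntegrand ρ (x + 2 * k) t := by
  rw [hyp0F3, ← tsum_mul_left]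
  congr 1 with k
  have hpow : (t:ℂ) ^ (x + 2 * k - 1) = (t:ℂ) ^ (x - 1) * (t:ℂ) ^ (2 * k) := by
    rw [← cpow_natCast, ← cpow_add _ _ (ofReal_ne_zero.2 ht.ne')]
    push_cast
    ring_nf
  simp only [extGammaIntegrand, hpow, mul_pow, ← pow_mul]
  ring

lemma unifiedG_term_eq (b c ν ρ : ℂ) (hν : -1 < ν.re) {x : ℝ} (hx : 0 < x) (k : ℕ) :
    (-b) ^ k * genPoch c ρ (2 * k + ν) * ((x:ℂ) / 2) ^ (2 * (k:ℂ) + ν) /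
        (k ! * Complex.Gamma (ν + k + 1) * Complex.Gamma (ν + 2 * k + 1)) =
      (x:ℂ) ^ ν / (2 ^ ν * Complex.Gamma c * Complex.Gamma (ν + 1) ^ 2) *
        ((-b * (x:ℂ) ^ 2 / 16) ^ k /
            (poch (ν + 1) k * poch ((ν + 1) / 2) k * poch ((ν + 2) / 2) k * k !) *
          extGamma ρ (c + ν + 2 * k)) := by
  obtain ⟨h₁, h₂, h₃⟩ := re_pos_of_neg_one_lt_re hν
  have hΓ₁ : Complex.Gamma (ν + k + 1) = Complex.Gamma (ν + 1) * poch (ν + 1) k := by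
    rw [poch_eq_eval_ascPochhammer (ne_neg_natCast_of_re_pos h₁),
      ← Gamma_add_nat_eq_mul_eval_ascPochhammer (ne_neg_natCast_of_re_pos h₁), add_right_comm]
  have hΓ₂ : Complex.Gamma (ν + 2 * k + 1) =
      Complex.Gamma (ν + 1) * (4 ^ k * poch ((ν + 1) / 2) k * poch ((ν + 2) / 2) k) := by
    rw [poch_eq_eval_ascPochhammer (ne_neg_natCast_of_re_pos h₂),
      poch_eq_eval_ascPochhammer (ne_neg_natCast_of_re_pos h₃),
      show (ν + 2) / 2 = (ν + 1 + 1) / 2 by ring, ← ascPochhammer_eval_two_mul,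
      ← Gamma_add_nat_eq_mul_eval_ascPochhammer (ne_neg_natCast_of_re_pos h₁)]
    push_cast
    ring_nf
  have hpow : ((x:ℂ) / 2) ^ (2 * (k:ℂ) + ν) = (x:ℂ) ^ ν / 2 ^ ν * ((x:ℂ) ^ (2 * k) / 4 ^ k) := by
    have h2 : (x:ℂ) / 2 ≠ 0 := div_ne_zero (ofReal_ne_zero.2 hx.ne') two_ne_zero
    rw [cpow_add _ _ h2, mul_comm, ← ofReal_ofNat, div_cpow_ofReal_nonneg hx.le zero_le_two,
      ofReal_ofNat, show 2 * (k:ℂ) = ((2 * k : ℕ) : ℂ) by push_cast; ring, cpow_natCast, div_pow,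
      pow_mul 2]
    norm_num
  rw [genPoch, hΓ₁, hΓ₂, hpow, show c + (2 * k + ν) = c + ν + 2 * k by ring,
    show (-b * (x:ℂ) ^ 2 / 16) ^ k = (-b) ^ k * (x:ℂ) ^ (2 * k) / (4 ^ k * 4 ^ k) by
      rw [div_pow, mul_pow, ← mul_pow (4:ℂ), pow_mul]; norm_num]
  ring

lemma integral_mul_integral {α β : Type*} [MeasurableSpace α] [MeasurableSpace β]
    {μ : Measure α} {μ' : Measure β} (f : α → ℂ) (g : β → ℂ) :
    (∫ x, f x ∂μ) * (∫ y, g y ∂μ') = ∫ x, ∫ y, f x * g y ∂μ' ∂μ := by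
  simp_rw [integral_const_mul, integral_mul_const]

theorem unifiedG_eq_integral (b c ν ρ : ℂ) (hρ : 0 < ρ.re) (hc : 0 < c.re) (hν : -1 < ν.re)
    {x : ℝ} (hx : 0 < x) :
    unifiedG b c ν ρ x =
      (x:ℂ) ^ ν / (2 ^ ν * Complex.Gamma c * Complex.Gamma (ν + 1) ^ 2) *
        ∫ t in Ioi (0:ℝ), (t:ℂ) ^ (c + ν - 1) * Complex.exp (-(t:ℂ) - ρ / (t:ℂ)) *
          hyp0F3 (ν + 1) ((ν + 1) / 2) ((ν + 2) / 2) (-b * (x:ℂ) ^ 2 * (t:ℂ) ^ 2 / 16) := by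
  obtain ⟨h₁, h₂, h₃⟩ := re_pos_of_neg_one_lt_re hν
  have hs : -1 < (c + ν).re := by rw [add_re]; linarith
  have hre : ∀ k : ℕ, (c + ν + 2 * k).re = (c + ν).re + 2 * k := fun k => by simp
  have hexpand : ∀ t ∈ Ioi (0:ℝ),
      (t:ℂ) ^ (c + ν - 1) * Complex.exp (-(t:ℂ) - ρ / (t:ℂ)) *
          hyp0F3 (ν + 1) ((ν + 1) / 2) ((ν + 2) / 2) (-b * (x:ℂ) ^ 2 * (t:ℂ) ^ 2 / 16) =
        ∑' k : ℕ, (-b * (x:ℂ) ^ 2 / 16) ^ k /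
            (poch (ν + 1) k * poch ((ν + 1) / 2) k * poch ((ν + 2) / 2) k * k !) *
          extGammaIntegrand ρ (c + ν + 2 * k) t := fun t ht => by
    rw [← extGammaIntegrand_mul_hyp0F3 _ _ _ _ _ _ ht, mul_div_right_comm]
    rfl
  have hsum := summable_norm_hyp0F3_term_mul_Gamma h₁ h₂ h₃ (-b * (x:ℂ) ^ 2 / 16) hs
  simp only [← hre] at hsum
  rw [unifiedG, tsum_congr (unifiedG_term_eq b c ν ρ hν hx), tsum_mul_left,
    setIntegral_congr_fun measurableSet_Ioi hexpand,
    integral_tsum_mul_extGammaIntegrand hρ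
      (fun k => by rw [hre]; linarith [(k.cast_nonneg : (0:ℝ) ≤ k)]) hsum]

theorem stmt14 (b c ν w ρ : ℂ) (hρ : 0 < ρ.re) (hc : 0 < c.re) (hν : -1 < ν.re)
    (hw : -1 < w.re) (α β z : ℝ) (hα : 0 < α) (hβ : 0 < β) (hz : 0 < z) :
    unifiedG b c ν ρ ((α * z : ℝ):ℂ) * unifiedG b c w ρ ((β * z : ℝ):ℂ) =
      ((α * z : ℝ):ℂ) ^ ν * ((β * z : ℝ):ℂ) ^ w /
          ((2:ℂ) ^ (ν + w) * Complex.Gamma c ^ 2 * Complex.Gamma (ν + 1) ^ 2 *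
            Complex.Gamma (w + 1) ^ 2) *
        ∫ t in Ioi (0:ℝ), ∫ u in Ioi (0:ℝ),
          (t:ℂ) ^ (c + ν - 1) * (u:ℂ) ^ (c + w - 1) *
            Complex.exp (-(t:ℂ) - (u:ℂ) - ρ / (t:ℂ) - ρ / (u:ℂ)) *
            hyp0F3 (ν + 1) ((ν + 1) / 2) ((ν + 2) / 2)
              (-b * (α:ℂ) ^ 2 * (z:ℂ) ^ 2 * (t:ℂ) ^ 2 / 16) *
            hyp0F3 (w + 1) ((w + 1) / 2) ((w + 2) / 2)
              (-b * (β:ℂ) ^ 2 * (z:ℂ) ^ 2 * (u:ℂ) ^ 2 / 16) := by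
  rw [unifiedG_eq_integral b c ν ρ hρ hc hν (by positivity),
    unifiedG_eq_integral b c w ρ hρ hc hw (by positivity), cpow_add _ _ two_ne_zero]
  have hfactor : ∀ t u : ℝ, Complex.exp (-(t:ℂ) - (u:ℂ) - ρ / (t:ℂ) - ρ / (u:ℂ)) =
      Complex.exp (-(t:ℂ) - ρ / (t:ℂ)) * Complex.exp (-(u:ℂ) - ρ / (u:ℂ)) := fun t u => by
    rw [← Complex.exp_add]
    congr 1
    ring
  have harg : ∀ a t : ℝ, -b * ((a * z : ℝ) : ℂ) ^ 2 * (t:ℂ) ^ 2 / 16 =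
      -b * (a:ℂ) ^ 2 * (z:ℂ) ^ 2 * (t:ℂ) ^ 2 / 16 := fun a t => by push_cast; ring
  rw [mul_mul_mul_comm, integral_mul_integral]
  congr 1
  · ring
  refine setIntegral_congr_fun measurableSet_Ioi fun t _ =>
    setIntegral_congr_fun measurableSet_Ioi fun u _ => ?_
  rw [hfactor, harg α, harg β]
  ring
end

section
/- Let b, λ, ρ ∈ ℂ with b ≠ 0 and Re(ρ) > 0, let ν ∈ ℤ, and let z > 0 be real. Then the generalized four parameter Bessel-Clifford function satisfies C_{-ν}^{(b,λ)}(z;ρ) = (-b)^ν · z^ν · C_ν^{(b,λ)}(z;ρ), where (-b)^ν and z^ν are integer powers. -/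
open Complex MeasureTheory Real Set

lemma cliff_main (b lam ρ : ℂ) (n : ℕ) (z : ℝ) (hz : 0 < z) :
    cliffC b lam (-(n:ℂ)) ρ z = (-b) ^ n * (z:ℂ) ^ n * cliffC b lam (n:ℂ) ρ z := by
  have hzC : (z:ℂ) ≠ 0 := by
    simpa using (ne_of_gt hz : z ≠ 0)
  unfold cliffC unifiedG
  set s : ℂ := ((2 * Real.sqrt z : ℝ) : ℂ) / 2 with hs
  set f : ℕ → ℂ := fun k => (-b) ^ k * genPoch lam ρ (2 * (k:ℂ) + (-(n:ℂ))) *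
      s ^ (2 * (k:ℂ) + (-(n:ℂ))) /
    ((k.factorial : ℂ) * Complex.Gamma ((-(n:ℂ)) + (k:ℂ) + 1) *
      Complex.Gamma ((-(n:ℂ)) + 2 * (k:ℂ) + 1)) with hf
  set g : ℕ → ℂ := fun k => (-b) ^ k * genPoch lam ρ (2 * (k:ℂ) + (n:ℂ)) *
      s ^ (2 * (k:ℂ) + (n:ℂ)) /
    ((k.factorial : ℂ) * Complex.Gamma ((n:ℂ) + (k:ℂ) + 1) *
      Complex.Gamma ((n:ℂ) + 2 * (k:ℂ) + 1)) with hg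
  have hshift : ∑' j : ℕ, f (j + n) = ∑' k : ℕ, f k := by
    apply Function.Injective.tsum_eq (add_left_injective n)
    intro k hk
    rcases le_or_gt n k with h | h
    · exact ⟨k - n, Nat.sub_add_cancel h⟩
    · exfalso
      apply hk
      have hG : Complex.Gamma (-(n:ℂ) + (k:ℂ) + 1) = 0 := by
        have he : -(n:ℂ) + (k:ℂ) + 1 = -(((n - k - 1 : ℕ)):ℂ) := by
          have h1 : ((n - k - 1 : ℕ) : ℂ) = (n:ℂ) - (k:ℂ) - 1 := by
            have h2 : n - k - 1 + (k + 1) = n := by omega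
            have h3 := congrArg (Nat.cast : ℕ → ℂ) h2
            push_cast at h3
            linear_combination h3
          rw [h1]; ring
        rw [he, Complex.Gamma_neg_nat_eq_zero]
      simp only [hf, hG, mul_zero, zero_mul, div_zero]
  have hterm : ∀ j : ℕ, f (j + n) = (-b) ^ n * g j := by
    intro j
    have he1 : 2 * (((j + n : ℕ)):ℂ) + (-(n:ℂ)) = 2 * (j:ℂ) + (n:ℂ) := by push_cast; ring
    have he2 : (-(n:ℂ)) + (((j + n : ℕ)):ℂ) + 1 = (j:ℂ) + 1 := by push_cast; ring
    have he3 : (-(n:ℂ)) + 2 * (((j + n : ℕ)):ℂ) + 1 = (n:ℂ) + 2 * (j:ℂ) + 1 := by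
      push_cast; ring
    have hfac : (((j + n : ℕ).factorial):ℂ) = Complex.Gamma ((n:ℂ) + (j:ℂ) + 1) := by
      have : (n:ℂ) + (j:ℂ) + 1 = ((n + j : ℕ):ℂ) + 1 := by push_cast; ring
      rw [this, Complex.Gamma_nat_eq_factorial, Nat.add_comm j n]
    have hgam : Complex.Gamma ((j:ℂ) + 1) = ((j.factorial):ℂ) := by
      exact_mod_cast Complex.Gamma_nat_eq_factorial j
    simp only [hf, hg, he1, he2, he3, hfac, hgam, pow_add]
    ring
  have hsum : ∑' k : ℕ, f k = (-b) ^ n * ∑' j : ℕ, g j := by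
    rw [← hshift]
    simp_rw [hterm]
    exact tsum_mul_left
  rw [hsum]
  have hpow : (z:ℂ) ^ (-(-(n:ℂ)) / 2) = (z:ℂ) ^ n * (z:ℂ) ^ (-(n:ℂ) / 2) := by
    rw [← Complex.cpow_natCast, ← Complex.cpow_add _ _ hzC]
    congr 1
    ring
  rw [hpow]
  ring

theorem stmt17 (b lam ρ : ℂ) (hb : b ≠ 0) (hρ : 0 < ρ.re) (ν : ℤ)
    (z : ℝ) (hz : 0 < z) :
    cliffC b lam (-(ν:ℂ)) ρ z = (-b) ^ ν * (z:ℂ) ^ ν * cliffC b lam (ν:ℂ) ρ z := by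
  have hbz : (-b) ≠ 0 := neg_ne_zero.mpr hb
  have hzC : (z:ℂ) ≠ 0 := by simpa using (ne_of_gt hz : z ≠ 0)
  obtain ⟨n, rfl | rfl⟩ := ν.eq_nat_or_neg
  · have := cliff_main b lam ρ n z hz
    rw [show (((n:ℤ)):ℂ) = (n:ℂ) by push_cast; rfl, zpow_natCast, zpow_natCast]
    exact this
  · have h := cliff_main b lam ρ n z hz
    have h1 : ((((-(n:ℤ)):ℤ)):ℂ) = -(n:ℂ) := by push_cast; ring
    rw [h1, neg_neg, h, zpow_neg, zpow_neg, zpow_natCast, zpow_natCast]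
    field_simp
end

section
/- Let b, c, λ, ρ ∈ ℂ with Re(ρ) > 0, let z > 0 be real, and let t ∈ ℂ with t ≠ 0. Then the two generating-function identities hold: (i) the family (g_{n-1/2}^{(b,c+1/2)}(z;ρ) · t^n)_{n∈ℤ} is summable and Σ_{n∈ℤ} g_{n-1/2}^{(b,c+1/2)}(z;ρ) t^n = √(π/(2z)) · Σ_{m=0}^∞ (c;ρ)_m ((t - b/t)·z/2)^m/(m!)²; (ii) the family (C_n^{(b,λ)}(z;ρ) · t^n)_{n∈ℤ} is summable and Σ_{n∈ℤ} C_n^{(b,λ)}(z;ρ) t^n = Σ_{m=0}^∞ (λ;ρ)_m (t - bz/t)^m/(m!)². -/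
open Complex MeasureTheory Real Set

/-!
Substituting `m = n + 2k` in the double series `∑ₙ ∑ₖ` defining `∑ₙ Gₙ(x) sⁿ`, the factor
`1 / (k! Γ(m - k + 1) Γ(m + 1))` becomes `binom m k / (m!)²` for `0 ≤ k ≤ m` and vanishes
otherwise, so the inner sum over `k` is `(c;ρ)_m (x/2)^m (s - b/s)^m / (m!)²` by the binomial
theorem. The rearrangement is justified by absolute convergence: `|(c;ρ)_m| ≤ Γ(Re c + m) / |Γ(c)|`
for `Re ρ ≥ 0`, and `∑ Γ(a + m) R^m / (m!)²` converges by the ratio test. Both identities are the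
cases `x = z`, `s = t` and `x = 2√z`, `s = t / √z` of this generating function for integer order.
-/

open scoped Nat
open Filter Finset

theorem Real.summable_Gamma_add_mul_pow_div_factorial_sq (a : ℝ) {R : ℝ} (hR : 0 ≤ R) :
    Summable fun M : ℕ => Real.Gamma (a + M) * R ^ M / (M ! : ℝ) ^ 2 := by
  refine summable_of_ratio_norm_eventually_le (r := 1 / 2) (by norm_num) ?_
  filter_upwards [eventually_gt_atTop ⌈|a| + 4 * R⌉₊] with M hM
  have hM : |a| + 4 * R < M := Nat.lt_of_ceil_lt hM
  have haM : 0 < a + M := by linarith [neg_abs_le a]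
  have hratio : (a + M) * R / (M + 1) ^ 2 ≤ 1 / 2 := by
    rw [div_le_iff₀ (by positivity)]
    nlinarith [le_abs_self a, mul_nonneg (sub_nonneg.2 (le_abs_self a)) hR]
  have hstep : Real.Gamma (a + ↑(M + 1)) * R ^ (M + 1) / ((M + 1)! : ℝ) ^ 2 =
      (a + M) * R / (M + 1) ^ 2 * (Real.Gamma (a + M) * R ^ M / (M ! : ℝ) ^ 2) := by
    rw [Nat.cast_succ, ← add_assoc, Real.Gamma_add_one haM.ne', Nat.factorial_succ]
    push_cast
    field_simp
    ring
  have hterm : 0 ≤ Real.Gamma (a + M) * R ^ M / (M ! : ℝ) ^ 2 := by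
    have := Real.Gamma_pos_of_pos haM
    positivity
  rw [hstep, norm_mul, Real.norm_of_nonneg hterm, Real.norm_of_nonneg (by positivity)]
  exact mul_le_mul_of_nonneg_right hratio hterm

theorem norm_extGamma_le {ρ x : ℂ} (hρ : 0 ≤ ρ.re) (hx : 0 < x.re) :
    ‖extGamma ρ x‖ ≤ Real.Gamma x.re := by
  rw [extGamma, Real.Gamma_eq_integral hx]
  refine norm_integral_le_of_norm_le (Real.GammaIntegral_convergent hx) ?_
  filter_upwards [ae_restrict_mem measurableSet_Ioi] with s (hs : 0 < s)
  rw [norm_mul, Complex.norm_cpow_eq_rpow_re_of_pos hs, Complex.norm_exp, mul_comm]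
  have hre : (-(s : ℂ) - ρ / s).re ≤ -s := by
    simp only [sub_re, neg_re, ofReal_re, div_ofReal_re]
    linarith [div_nonneg hρ hs.le]
  rw [show (x - 1).re = x.re - 1 by simp]
  exact mul_le_mul_of_nonneg_right (Real.exp_le_exp.2 hre) (by positivity)

theorem norm_genPoch_le {c ρ μ : ℂ} (hρ : 0 ≤ ρ.re) (h : 0 < (c + μ).re) :
    ‖genPoch c ρ μ‖ ≤ Real.Gamma (c + μ).re / ‖Complex.Gamma c‖ := by
  rw [genPoch, norm_div]
  exact div_le_div_of_nonneg_right (norm_extGamma_le hρ h) (norm_nonneg _)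

theorem summable_genPoch_mul_pow_div_factorial_sq {c ρ : ℂ} (hρ : 0 ≤ ρ.re) (x : ℂ) :
    Summable fun m : ℕ => genPoch c ρ m * x ^ m / (m ! : ℂ) ^ 2 := by
  refine Summable.of_norm_bounded_eventually
    ((Real.summable_Gamma_add_mul_pow_div_factorial_sq c.re (norm_nonneg x)).div_const
      ‖Complex.Gamma c‖) ?_
  rw [Nat.cofinite_eq_atTop]
  filter_upwards [eventually_gt_atTop ⌈-c.re⌉₊] with m hm
  have hpos : 0 < (c + m).re := by
    simp only [add_re, natCast_re]
    linarith [Nat.lt_of_ceil_lt hm]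
  calc ‖genPoch c ρ m * x ^ m / (m ! : ℂ) ^ 2‖
      = ‖genPoch c ρ m‖ * ‖x‖ ^ m / (m ! : ℝ) ^ 2 := by simp
    _ ≤ Real.Gamma (c.re + m) / ‖Complex.Gamma c‖ * ‖x‖ ^ m / (m ! : ℝ) ^ 2 := by
      gcongr
      simpa using norm_genPoch_le hρ hpos
    _ = Real.Gamma (c.re + m) * ‖x‖ ^ m / (m ! : ℝ) ^ 2 / ‖Complex.Gamma c‖ := by ring

theorem add_div_pow_eq_sum_zpow {K : Type*} [Field K] {t : K} (ht : t ≠ 0) (u : K) (M : ℕ) :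
    (t + u / t) ^ M = ∑ k ∈ range (M + 1), (M.choose k : K) * u ^ k * t ^ ((M : ℤ) - 2 * k) := by
  rw [add_comm, add_pow]
  refine sum_congr rfl fun k hk => ?_
  have hkM : k ≤ M := Nat.lt_succ_iff.1 (mem_range.1 hk)
  have hexp : (M : ℤ) - 2 * k = (M - k : ℕ) + -(k : ℤ) := by omega
  rw [hexp, zpow_add₀ ht, zpow_natCast, zpow_neg, zpow_natCast, div_pow]
  field_simp

theorem Complex.Gamma_intCast_of_nonpos {n : ℤ} (hn : n ≤ 0) : Complex.Gamma n = 0 := by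
  obtain ⟨m, rfl⟩ := Int.exists_eq_neg_ofNat hn
  simpa using Complex.Gamma_neg_nat_eq_zero m

/-- The `(n, k)` term of `∑ₙ Gₙ(x) sⁿ` with `u = x / 2`, indexed by the total degree `m = n + 2k`
instead of `n`: for fixed `m` only `k ≤ m` contribute, and their sum is a binomial expansion. -/
noncomputable def genFunTerm (b c ρ u s : ℂ) (m : ℤ) (k : ℕ) : ℂ :=
  (-b) ^ k * genPoch c ρ m * u ^ m * s ^ (m - 2 * k) /
    (k ! * Complex.Gamma (m - k + 1) * Complex.Gamma (m + 1))

section genFunTerm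

variable {b c ρ u s : ℂ}

-- The convention `1 / Γ(-j) = 0` is `x / 0 = 0` together with `Complex.Gamma (-j) = 0`.
theorem genFunTerm_eq_zero {m : ℤ} {k : ℕ} (h : m < k) : genFunTerm b c ρ u s m k = 0 := by
  have hΓ : Complex.Gamma ((m : ℂ) - k + 1) = 0 := by
    simpa using Complex.Gamma_intCast_of_nonpos (n := m - k + 1) (by omega)
  rw [genFunTerm, hΓ, mul_zero, zero_mul, div_zero]

theorem genFunTerm_natCast {M k : ℕ} (hk : k ≤ M) :
    genFunTerm b c ρ u s M k =
      genPoch c ρ M * u ^ M / (M ! : ℂ) ^ 2 *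
        ((M.choose k : ℂ) * (-b) ^ k * s ^ ((M : ℤ) - 2 * k)) := by
  have hΓ₁ : Complex.Gamma ((M : ℤ) - k + 1 : ℂ) = (M - k)! := by
    rw [← Complex.Gamma_nat_eq_factorial]; push_cast [hk]; ring_nf
  have hΓ₂ : Complex.Gamma ((M : ℤ) + 1 : ℂ) = M ! := by
    simpa using Complex.Gamma_nat_eq_factorial M
  have hchoose : (M.choose k : ℂ) * k ! * (M - k)! = M ! := by
    exact_mod_cast Nat.choose_mul_factorial_mul_factorial hk
  rw [genFunTerm, hΓ₁, hΓ₂, ← hchoose, zpow_natCast, Int.cast_natCast]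
  have := (Nat.choose_pos hk).ne'
  field_simp

theorem hasSum_genFunTerm_natCast (hs : s ≠ 0) (M : ℕ) :
    HasSum (fun k => genFunTerm b c ρ u s M k)
      (genPoch c ρ M * ((s - b / s) * u) ^ M / (M ! : ℂ) ^ 2) := by
  have hval : genPoch c ρ M * ((s - b / s) * u) ^ M / (M ! : ℂ) ^ 2 =
      ∑ k ∈ range (M + 1), genFunTerm b c ρ u s M k := by
    rw [sum_congr rfl fun k hk => genFunTerm_natCast (Nat.lt_succ_iff.1 (Finset.mem_range.1 hk)),
      ← mul_sum, sub_eq_add_neg, ← neg_div, mul_pow, add_div_pow_eq_sum_zpow hs]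
    ring
  rw [hval]
  exact hasSum_sum_of_ne_finset_zero fun k hk =>
    genFunTerm_eq_zero (by simp only [Finset.mem_range, not_lt] at hk; omega)

theorem hasSum_norm_genFunTerm_natCast (hs : s ≠ 0) (M : ℕ) :
    HasSum (fun k => ‖genFunTerm b c ρ u s M k‖)
      ‖genPoch c ρ M * (((‖s‖ + ‖b‖ / ‖s‖ : ℝ) : ℂ) * u) ^ M / (M ! : ℂ) ^ 2‖ := by
  have hs' : ‖s‖ ≠ 0 := norm_ne_zero_iff.2 hs
  have hS : 0 ≤ ‖s‖ + ‖b‖ / ‖s‖ := by positivity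
  have hval : ‖genPoch c ρ M * (((‖s‖ + ‖b‖ / ‖s‖ : ℝ) : ℂ) * u) ^ M / (M ! : ℂ) ^ 2‖ =
      ∑ k ∈ range (M + 1), ‖genFunTerm b c ρ u s M k‖ := calc
    _ = ‖genPoch c ρ M * u ^ M / (M ! : ℂ) ^ 2‖ * (‖s‖ + ‖b‖ / ‖s‖) ^ M := by
      rw [mul_pow, mul_comm _ (u ^ M), ← mul_assoc, mul_div_right_comm, norm_mul, norm_pow,
        Complex.norm_real, Real.norm_of_nonneg hS]
    _ = ∑ k ∈ range (M + 1), ‖genFunTerm b c ρ u s M k‖ := by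
      rw [add_div_pow_eq_sum_zpow hs', mul_sum]
      refine sum_congr rfl fun k hk => ?_
      rw [genFunTerm_natCast (Nat.lt_succ_iff.1 (Finset.mem_range.1 hk))]
      simp [norm_zpow]
  rw [hval]
  exact hasSum_sum_of_ne_finset_zero fun k hk => by
    rw [genFunTerm_eq_zero (by simp only [Finset.mem_range, not_lt] at hk; omega), norm_zero]

theorem genFunTerm_of_notMem_range {m : ℤ} (hm : m ∉ Set.range ((↑) : ℕ → ℤ)) (k : ℕ) :
    genFunTerm b c ρ u s m k = 0 :=
  genFunTerm_eq_zero (by by_contra! h; exact hm ⟨m.toNat, Int.toNat_of_nonneg (by omega)⟩)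

theorem summable_genFunTerm (hρ : 0 ≤ ρ.re) (hs : s ≠ 0) :
    Summable fun p : ℤ × ℕ => genFunTerm b c ρ u s p.1 p.2 := by
  refine Summable.of_norm ((summable_prod_of_nonneg fun _ => norm_nonneg _).2 ⟨fun m => ?_, ?_⟩)
  · exact summable_of_ne_finset_zero (s := range (m.toNat + 1)) fun k hk => by
      rw [genFunTerm_eq_zero (by simp only [Finset.mem_range, not_lt] at hk; omega), norm_zero]
  · refine (Nat.cast_injective.summable_iff fun m hm => ?_).1 ?_
    · simp [genFunTerm_of_notMem_range hm]
    have hfib : (fun M : ℕ => ∑' k, ‖genFunTerm b c ρ u s M k‖) =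
        fun M : ℕ => ‖genPoch c ρ M * (((‖s‖ + ‖b‖ / ‖s‖ : ℝ) : ℂ) * u) ^ M / (M ! : ℂ) ^ 2‖ :=
      funext fun M => (hasSum_norm_genFunTerm_natCast hs M).tsum_eq
    rw [Function.comp_def, hfib]
    exact (summable_genPoch_mul_pow_div_factorial_sq hρ _).norm

theorem hasSum_genFunTerm (hρ : 0 ≤ ρ.re) (hs : s ≠ 0) :
    HasSum (fun p : ℤ × ℕ => genFunTerm b c ρ u s p.1 p.2)
      (∑' M : ℕ, genPoch c ρ M * ((s - b / s) * u) ^ M / (M ! : ℂ) ^ 2) := by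
  have hsum := summable_genFunTerm (b := b) (c := c) (u := u) hρ hs
  have hrows := hsum.hasSum.prod_fiberwise fun m => (hsum.prod_factor m).hasSum
  have hnat := (Nat.cast_injective.hasSum_iff fun m hm => by
    simp [genFunTerm_of_notMem_range hm]).2 hrows
  have hfib : (fun M : ℕ => ∑' k, genFunTerm b c ρ u s M k) =
      fun M : ℕ => genPoch c ρ M * ((s - b / s) * u) ^ M / (M ! : ℂ) ^ 2 :=
    funext fun M => (hasSum_genFunTerm_natCast hs M).tsum_eq
  rw [Function.comp_def, hfib] at hnat
  rw [hnat.tsum_eq]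
  exact hsum.hasSum

end genFunTerm

theorem hasSum_unifiedGInt_mul_zpow {b c ρ s : ℂ} (hρ : 0 ≤ ρ.re) (x : ℂ) (hs : s ≠ 0) :
    HasSum (fun n : ℤ => unifiedGInt b c ρ n x * s ^ n)
      (∑' m : ℕ, genPoch c ρ m * ((s - b / s) * x / 2) ^ m / (m ! : ℂ) ^ 2) := by
  let shear : ℤ × ℕ ≃ ℤ × ℕ :=
    { toFun := fun p => (p.1 + 2 * p.2, p.2)
      invFun := fun p => (p.1 - 2 * p.2, p.2)
      left_inv := fun p => by simp
      right_inv := fun p => by simp }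
  have hsum := shear.hasSum_iff.2 (hasSum_genFunTerm (b := b) (c := c) (u := x / 2) hρ hs)
  simp_rw [mul_div_assoc (s - b / s)]
  refine hsum.prod_fiberwise fun n => ?_
  rw [(hsum.summable.prod_factor n).hasSum_iff, unifiedGInt, ← tsum_mul_right]
  refine tsum_congr fun k => ?_
  simp only [shear, Equiv.coe_fn_mk, Function.comp_apply, genFunTerm]
  rw [add_sub_cancel_right, add_comm n]
  push_cast
  ring_nf

theorem unifiedG_intCast (b c ρ x : ℂ) (n : ℤ) : unifiedG b c n ρ x = unifiedGInt b c ρ n x := by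
  refine tsum_congr fun k => ?_
  rw [show 2 * (k : ℂ) + n = ((2 * k + n : ℤ) : ℂ) by push_cast; ring, Complex.cpow_intCast]

theorem sphG_intCast_sub_half (b c ρ : ℂ) (n : ℤ) (z : ℝ) :
    sphG b (c + 1 / 2) (n - 1 / 2) ρ z = (Real.sqrt (π / (2 * z)) : ℂ) * unifiedGInt b c ρ n z := by
  rw [sphG, add_sub_cancel_right, sub_add_cancel, unifiedG_intCast]

theorem ofReal_cpow_neg_intCast_div_two {z : ℝ} (hz : 0 ≤ z) (n : ℤ) :
    (z : ℂ) ^ (-(n : ℂ) / 2) = ((Real.sqrt z : ℝ) : ℂ) ^ (-n) := by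
  have hreal : z ^ (-(n : ℝ) / 2) = Real.sqrt z ^ (-n) := by
    rw [Real.sqrt_eq_rpow, ← Real.rpow_intCast, ← Real.rpow_mul hz]
    push_cast
    ring_nf
  rw [← Complex.ofReal_zpow, ← hreal, Complex.ofReal_cpow hz]
  push_cast
  rfl

theorem cliffC_intCast_mul_zpow (b lam ρ t : ℂ) {z : ℝ} (hz : 0 < z) (n : ℤ) :
    cliffC b lam n ρ z * t ^ n =
      unifiedGInt b lam ρ n ((2 * Real.sqrt z : ℝ) : ℂ) * (t / (Real.sqrt z : ℝ)) ^ n := by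
  rw [cliffC, unifiedG_intCast, ofReal_cpow_neg_intCast_div_two hz.le, div_zpow, zpow_neg]
  ring

theorem hasSum_sphG_mul_zpow {b c ρ t : ℂ} (hρ : 0 ≤ ρ.re) (z : ℝ) (ht : t ≠ 0) :
    HasSum (fun n : ℤ => sphG b (c + 1 / 2) (n - 1 / 2) ρ z * t ^ n)
      ((Real.sqrt (π / (2 * z)) : ℂ) *
        ∑' m : ℕ, genPoch c ρ m * ((t - b / t) * z / 2) ^ m / (m ! : ℂ) ^ 2) := by
  simpa only [sphG_intCast_sub_half, mul_assoc] using
    (hasSum_unifiedGInt_mul_zpow hρ (z : ℂ) ht).mul_left (Real.sqrt (π / (2 * z)) : ℂ)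

theorem hasSum_cliffC_mul_zpow {b lam ρ t : ℂ} (hρ : 0 ≤ ρ.re) {z : ℝ} (hz : 0 < z) (ht : t ≠ 0) :
    HasSum (fun n : ℤ => cliffC b lam n ρ z * t ^ n)
      (∑' m : ℕ, genPoch lam ρ m * (t - b * z / t) ^ m / (m ! : ℂ) ^ 2) := by
  have hsqrt : ((Real.sqrt z : ℝ) : ℂ) ≠ 0 := ofReal_ne_zero.2 (Real.sqrt_pos.2 hz).ne'
  have hvar : (t / (Real.sqrt z : ℝ) - b / (t / (Real.sqrt z : ℝ))) *
      ((2 * Real.sqrt z : ℝ) : ℂ) / 2 = t - b * z / t := by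
    have hsq : ((Real.sqrt z : ℝ) : ℂ) ^ 2 = z := by rw [← ofReal_pow, Real.sq_sqrt hz.le]
    push_cast at hsqrt ⊢
    field_simp
    rw [hsq]
    ring
  simp_rw [cliffC_intCast_mul_zpow b lam ρ t hz, ← hvar]
  exact hasSum_unifiedGInt_mul_zpow hρ _ (div_ne_zero ht hsqrt)

theorem stmt18 (b c lam ρ : ℂ) (hρ : 0 < ρ.re) (z : ℝ) (hz : 0 < z)
    (t : ℂ) (ht : t ≠ 0) :
    (Summable (fun n : ℤ => sphG b (c + 1/2) ((n:ℂ) - 1/2) ρ z * t ^ n) ∧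
      ∑' n : ℤ, sphG b (c + 1/2) ((n:ℂ) - 1/2) ρ z * t ^ n =
        (Real.sqrt (π / (2 * z)) : ℂ) *
          ∑' m : ℕ, genPoch c ρ (m:ℂ) * ((t - b / t) * (z:ℂ) / 2) ^ m / (m.factorial : ℂ) ^ 2) ∧
    (Summable (fun n : ℤ => cliffC b lam (n:ℂ) ρ z * t ^ n) ∧
      ∑' n : ℤ, cliffC b lam (n:ℂ) ρ z * t ^ n =
        ∑' m : ℕ, genPoch lam ρ (m:ℂ) * (t - b * (z:ℂ) / t) ^ m / (m.factorial : ℂ) ^ 2) := by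
  have hsph := hasSum_sphG_mul_zpow (b := b) (c := c) hρ.le z ht
  have hcliff := hasSum_cliffC_mul_zpow (b := b) (lam := lam) hρ.le hz ht
  exact ⟨⟨hsph.summable, hsph.tsum_eq⟩, hcliff.summable, hcliff.tsum_eq⟩
end
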